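/- arXiv:2405.16161 — 3 statements merged into one kernel-verified Lean document; each statement's English description precedes it below -/
import Mathlib

section
/- For a bounded measurable function φ with |φ(y,a,x)| ≤ M and vectors β, β₀ with ‖β − β₀‖ < R, the function g(y,a,x;β) = φ(y,a,x)(1{xᵀβ > 0} − 1{xᵀβ₀ > 0}) satisfies |g(y,a,x;β)| ≤ M·1{−k₀R ≤ xᵀβ₀ ≤ k₀R} whenever ‖x‖ ≤ k₀, and consequently if P(−k₀R ≤ Xᵀβ₀ ≤ k₀R) ≤ k₁·2k₀R then E[sup_{‖β−β₀‖<R} g(Y,A,X;β)²] ≤ 2 M² k₁ k₀ R. -/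
open MeasureTheory
open scoped InnerProductSpace ENNReal

/-- Envelope bound and second-moment bound `P G_R² = O(R)` for the indicator-difference class. -/
theorem stmt_5 {Ω : Type*} {l : ℕ} [MeasurableSpace Ω]
    (P : Measure Ω) [IsProbabilityMeasure P]
    (φ : ℝ → ℝ → EuclideanSpace ℝ (Fin l) → ℝ)
    (β₀ : EuclideanSpace ℝ (Fin l)) (M R k₀ k₁ : ℝ)
    (hM : 0 < M) (hR : 0 < R) (hk₀ : 0 < k₀) (hk₁ : 0 < k₁)
    (hφ : ∀ y a x, |φ y a x| ≤ M)
    (X : Ω → EuclideanSpace ℝ (Fin l)) (A Y : Ω → ℝ)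
    (hXsupp : ∀ ω, ‖X ω‖ ≤ k₀)
    (hslab : P {ω | -(k₀ * R) ≤ ⟪X ω, β₀⟫_ℝ ∧ ⟪X ω, β₀⟫_ℝ ≤ k₀ * R}
        ≤ ENNReal.ofReal (k₁ * (2 * k₀ * R))) :
    (∀ (y a : ℝ) (x β : EuclideanSpace ℝ (Fin l)), ‖x‖ ≤ k₀ → ‖β - β₀‖ < R →
      |φ y a x * ((if (0:ℝ) < ⟪x, β⟫_ℝ then (1:ℝ) else 0)
          - (if (0:ℝ) < ⟪x, β₀⟫_ℝ then (1:ℝ) else 0))|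
        ≤ M * (if -(k₀ * R) ≤ ⟪x, β₀⟫_ℝ ∧ ⟪x, β₀⟫_ℝ ≤ k₀ * R then (1:ℝ) else 0))
    ∧ (∫ ω, ⨆ β : {β : EuclideanSpace ℝ (Fin l) // ‖β - β₀‖ < R},
          (φ (Y ω) (A ω) (X ω) * ((if (0:ℝ) < ⟪X ω, (β : EuclideanSpace ℝ (Fin l))⟫_ℝ
              then (1:ℝ) else 0)
            - (if (0:ℝ) < ⟪X ω, β₀⟫_ℝ then (1:ℝ) else 0))) ^ 2 ∂P
        ≤ 2 * M ^ 2 * k₁ * k₀ * R) := by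
  have key : ∀ (y a : ℝ) (x β : EuclideanSpace ℝ (Fin l)), ‖x‖ ≤ k₀ → ‖β - β₀‖ < R →
      |φ y a x * ((if (0:ℝ) < ⟪x, β⟫_ℝ then (1:ℝ) else 0)
          - (if (0:ℝ) < ⟪x, β₀⟫_ℝ then (1:ℝ) else 0))|
        ≤ M * (if -(k₀ * R) ≤ ⟪x, β₀⟫_ℝ ∧ ⟪x, β₀⟫_ℝ ≤ k₀ * R then (1:ℝ) else 0) := by
    intro y a x β hx hβ
    by_cases hc : -(k₀ * R) ≤ ⟪x, β₀⟫_ℝ ∧ ⟪x, β₀⟫_ℝ ≤ k₀ * R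
    · rw [if_pos hc, mul_one, abs_mul]
      have h1 : |(if (0:ℝ) < ⟪x, β⟫_ℝ then (1:ℝ) else 0)
          - (if (0:ℝ) < ⟪x, β₀⟫_ℝ then (1:ℝ) else 0)| ≤ 1 := by
        split_ifs <;> norm_num
      calc |φ y a x| * |(if (0:ℝ) < ⟪x, β⟫_ℝ then (1:ℝ) else 0)
            - (if (0:ℝ) < ⟪x, β₀⟫_ℝ then (1:ℝ) else 0)|
          ≤ M * 1 := mul_le_mul (hφ y a x) h1 (abs_nonneg _) hM.le
        _ = M := mul_one M
    · rw [if_neg hc, mul_zero]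
      have hxb : |⟪x, β⟫_ℝ - ⟪x, β₀⟫_ℝ| ≤ k₀ * R := by
        rw [← inner_sub_right]
        calc |⟪x, β - β₀⟫_ℝ| ≤ ‖x‖ * ‖β - β₀‖ := abs_real_inner_le_norm x (β - β₀)
          _ ≤ k₀ * R := mul_le_mul hx hβ.le (norm_nonneg _) hk₀.le
      obtain ⟨hl, hr⟩ := abs_le.mp hxb
      rw [not_and_or] at hc
      push_neg at hc
      have heq : (if (0:ℝ) < ⟪x, β⟫_ℝ then (1:ℝ) else 0)
          = (if (0:ℝ) < ⟪x, β₀⟫_ℝ then (1:ℝ) else 0) := by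
        rcases hc with h | h
        · rw [if_neg (by linarith), if_neg (by linarith)]
        · rw [if_pos (by nlinarith), if_pos (by nlinarith)]
      rw [heq, sub_self, mul_zero, abs_zero]
  refine ⟨key, ?_⟩
  set g : Ω → {β : EuclideanSpace ℝ (Fin l) // ‖β - β₀‖ < R} → ℝ := fun ω β =>
    (φ (Y ω) (A ω) (X ω) * ((if (0:ℝ) < ⟪X ω, (β : EuclideanSpace ℝ (Fin l))⟫_ℝ
        then (1:ℝ) else 0)
      - (if (0:ℝ) < ⟪X ω, β₀⟫_ℝ then (1:ℝ) else 0))) ^ 2 with hg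
  have hne : Nonempty {β : EuclideanSpace ℝ (Fin l) // ‖β - β₀‖ < R} :=
    ⟨⟨β₀, by simpa using hR⟩⟩
  have habs : ∀ ω (β : {β : EuclideanSpace ℝ (Fin l) // ‖β - β₀‖ < R}),
      g ω β ≤ M^2 * (if -(k₀ * R) ≤ ⟪X ω, β₀⟫_ℝ ∧ ⟪X ω, β₀⟫_ℝ ≤ k₀ * R
        then (1:ℝ) else 0) := by
    intro ω β
    have h := key (Y ω) (A ω) (X ω) β (hXsupp ω) β.2
    have h2 : g ω β ≤ (M * (if -(k₀ * R) ≤ ⟪X ω, β₀⟫_ℝ ∧ ⟪X ω, β₀⟫_ℝ ≤ k₀ * R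
        then (1:ℝ) else 0)) ^ 2 := by
      rw [hg]
      exact sq_le_sq' (by linarith [abs_le.mp h, abs_nonneg (φ (Y ω) (A ω) (X ω) *
        ((if (0:ℝ) < ⟪X ω, (β : EuclideanSpace ℝ (Fin l))⟫_ℝ then (1:ℝ) else 0)
          - (if (0:ℝ) < ⟪X ω, β₀⟫_ℝ then (1:ℝ) else 0)))]) (abs_le.mp h).2
    refine h2.trans_eq ?_
    split_ifs <;> ring
  have hbdd : ∀ ω, BddAbove (Set.range (g ω)) := by
    intro ω
    refine ⟨M^2, ?_⟩
    rintro v ⟨β, rfl⟩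
    refine (habs ω β).trans ?_
    split_ifs <;> nlinarith
  have hnonneg : ∀ ω, 0 ≤ ⨆ β, g ω β := by
    intro ω
    have := le_ciSup (hbdd ω) (⟨β₀, by simpa using hR⟩ :
      {β : EuclideanSpace ℝ (Fin l) // ‖β - β₀‖ < R})
    refine le_trans ?_ this
    rw [hg]; simp
  have hle : ∀ ω, (⨆ β, g ω β) ≤ M^2 * (if -(k₀ * R) ≤ ⟪X ω, β₀⟫_ℝ ∧
      ⟪X ω, β₀⟫_ℝ ≤ k₀ * R then (1:ℝ) else 0) :=
    fun ω => ciSup_le (habs ω)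
  set S : Set Ω := {ω | -(k₀ * R) ≤ ⟪X ω, β₀⟫_ℝ ∧ ⟪X ω, β₀⟫_ℝ ≤ k₀ * R} with hS
  by_cases hi : Integrable (fun ω => ⨆ β, g ω β) P
  · rw [integral_eq_lintegral_of_nonneg_ae (Filter.Eventually.of_forall hnonneg)
      hi.aestronglyMeasurable]
    have h1 : ∫⁻ ω, ENNReal.ofReal (⨆ β, g ω β) ∂P
        ≤ ∫⁻ ω, S.indicator (fun _ => ENNReal.ofReal (M^2)) ω ∂P := by
      refine lintegral_mono fun ω => ?_
      by_cases hω : ω ∈ S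
      · rw [Set.indicator_of_mem hω]
        exact ENNReal.ofReal_le_ofReal ((hle ω).trans (by simp only [hS, Set.mem_setOf_eq] at hω; rw [if_pos hω, mul_one]))
      · rw [Set.indicator_of_notMem hω]
        have : (⨆ β, g ω β) ≤ 0 := (hle ω).trans (by simp only [hS, Set.mem_setOf_eq] at hω; rw [if_neg hω, mul_zero])
        simp [ENNReal.ofReal_eq_zero.mpr this]
    have h2 : ∫⁻ ω, S.indicator (fun _ => ENNReal.ofReal (M^2)) ω ∂P
        ≤ ENNReal.ofReal (M^2) * P S := lintegral_indicator_const_le S _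
    have h3 : ENNReal.ofReal (M^2) * P S
        ≤ ENNReal.ofReal (M^2) * ENNReal.ofReal (k₁ * (2 * k₀ * R)) :=
      mul_le_mul_right hslab _
    have hfin : ENNReal.ofReal (M^2) * ENNReal.ofReal (k₁ * (2 * k₀ * R)) ≠ ⊤ :=
      ENNReal.mul_ne_top ENNReal.ofReal_ne_top ENNReal.ofReal_ne_top
    calc (∫⁻ ω, ENNReal.ofReal (⨆ β, g ω β) ∂P).toReal
        ≤ (ENNReal.ofReal (M^2) * ENNReal.ofReal (k₁ * (2 * k₀ * R))).toReal :=
          ENNReal.toReal_mono hfin ((h1.trans h2).trans h3)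
      _ = M^2 * (k₁ * (2 * k₀ * R)) := by
          rw [ENNReal.toReal_mul, ENNReal.toReal_ofReal (by positivity),
            ENNReal.toReal_ofReal (by positivity)]
      _ = 2 * M ^ 2 * k₁ * k₀ * R := by ring
  · rw [integral_undef hi]
    positivity
end

section
/- Define L : ℝ^l → ℝ by L(s) = ∫ |Zᵀs| · S(Z) p(Z) dZ, where S ≥ 0 and p ≥ 0 are integrable with ∫ S(Z)p(Z)dZ < ∞, and suppose S(Z)p(Z) > 0 on a set of Z not contained in any hyperplane. Then the function C(s,t) = (L(s) + L(t) − L(s−t))/2 is a positive semidefinite kernel on ℝ^l, i.e., for any s₁,…,s_m ∈ ℝ^l and c₁,…,c_m ∈ ℝ with Σ cᵢ = 0 or in general, Σᵢⱼ cᵢcⱼ C(sᵢ, sⱼ) ≥ 0, and moreover C(s,s) = L(s) and L(s) > 0 for s ≠ 0. -/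
/-!
Pointwise in `z`, the kernel `(|a| + |b| - |a - b|) / 2` evaluated at `a = ⟪z, s⟫`, `b = ⟪z, t⟫`
equals `min a⁺ b⁺ + min a⁻ b⁻`, and `min x y = ∫ 1_{(0,x]} 1_{(0,y]}` is a Gram kernel, hence
positive semidefinite. Integrating a pointwise positive semidefinite kernel against the weight
`S p ≥ 0` keeps it positive semidefinite. Positivity of `L(s)` for `s ≠ 0` holds because the
integrand `|⟪z, s⟫| S(z) p(z)` is nonnegative and nonzero on a set of positive measure.
-/

open MeasureTheory
open scoped InnerProductSpace

section QuadraticForm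

variable {α ι : Type*} [MeasurableSpace α] {μ : Measure α} [Fintype ι]

theorem quadForm_integral_nonneg (c : ι → ℝ) (K : ι → ι → α → ℝ)
    (hK : ∀ i j, Integrable (K i j) μ) (hpsd : ∀ x, 0 ≤ ∑ i, ∑ j, c i * c j * K i j x) :
    0 ≤ ∑ i, ∑ j, c i * c j * ∫ x, K i j x ∂μ := by
  have hsum : ∑ i, ∑ j, c i * c j * ∫ x, K i j x ∂μ
      = ∫ x, ∑ i, ∑ j, c i * c j * K i j x ∂μ := by
    rw [integral_finsetSum _ fun i _ =>
      integrable_finsetSum _ fun j _ => (hK i j).const_mul (c i * c j)]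
    refine Finset.sum_congr rfl fun i _ => ?_
    rw [integral_finsetSum _ fun j _ => (hK i j).const_mul (c i * c j)]
    simp only [integral_const_mul]
  exact hsum ▸ integral_nonneg hpsd

theorem quadForm_mul_nonneg (c f : ι → ℝ) : 0 ≤ ∑ i, ∑ j, c i * c j * (f i * f j) := by
  have h : ∑ i, ∑ j, c i * c j * (f i * f j) = (∑ i, c i * f i) ^ 2 := by
    rw [sq, Finset.sum_mul_sum]
    exact Finset.sum_congr rfl fun i _ => Finset.sum_congr rfl fun j _ => by ring
  exact h ▸ sq_nonneg _

theorem quadForm_min_nonneg (c x : ι → ℝ) (hx : ∀ i, 0 ≤ x i) :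
    0 ≤ ∑ i, ∑ j, c i * c j * min (x i) (x j) := by
  let f : ι → ℝ → ℝ := fun i => (Set.Ioc 0 (x i)).indicator 1
  have hprod : ∀ i j, (fun u => f i u * f j u) = (Set.Ioc 0 (min (x i) (x j))).indicator 1 := by
    intro i j
    ext u
    simp only [f, ← Set.inter_indicator_mul, Set.Ioc_inter_Ioc, max_self, Pi.one_apply, mul_one]
    rfl
  have hmin : ∀ i j, min (x i) (x j) = ∫ u, f i u * f j u := by
    intro i j
    rw [hprod, integral_indicator_one measurableSet_Ioc, Real.volume_real_Ioc, sub_zero,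
      max_eq_left (le_min (hx i) (hx j))]
  have hint : ∀ i j, Integrable (fun u => f i u * f j u) := by
    intro i j
    rw [hprod]
    exact (integrable_indicator_iff measurableSet_Ioc).2
      (integrableOn_const (by simp [Real.volume_Ioc]))
  simp only [hmin]
  exact quadForm_integral_nonneg c _ hint fun u => quadForm_mul_nonneg c fun i => f i u

end QuadraticForm

theorem abs_add_abs_sub_abs_sub_div_two (a b : ℝ) :
    (|a| + |b| - |a - b|) / 2 = min a⁺ b⁺ + min a⁻ b⁻ := by
  simp only [posPart_def, negPart_def]
  rcases le_total a 0 with ha | ha <;> rcases le_total b 0 with hb | hb <;>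
    rcases le_total a b with hab | hab <;>
    simp [abs_of_nonneg, abs_of_nonpos, ha, hb, hab, sub_nonneg.2, sub_nonpos.2] <;> linarith

theorem quadForm_abs_kernel_nonneg {ι : Type*} [Fintype ι] (c a : ι → ℝ) :
    0 ≤ ∑ i, ∑ j, c i * c j * ((|a i| + |a j| - |a i - a j|) / 2) := by
  simp only [abs_add_abs_sub_abs_sub_div_two, mul_add, Finset.sum_add_distrib]
  exact add_nonneg (quadForm_min_nonneg c _ fun i => posPart_nonneg _)
    (quadForm_min_nonneg c _ fun i => negPart_nonneg _)

section AbsInnerKernel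

variable {E : Type*} [NormedAddCommGroup E] [InnerProductSpace ℝ E] [MeasurableSpace E]
  {μ : Measure E} {w : E → ℝ}

theorem quadForm_integral_abs_inner_kernel_nonneg (hw : ∀ z, 0 ≤ w z)
    (hInt : ∀ s, Integrable (fun z => |⟪z, s⟫_ℝ| * w z) μ)
    {ι : Type*} [Fintype ι] (c : ι → ℝ) (s : ι → E) :
    0 ≤ ∑ i, ∑ j, c i * c j *
      (((∫ z, |⟪z, s i⟫_ℝ| * w z ∂μ) + (∫ z, |⟪z, s j⟫_ℝ| * w z ∂μ)
        - ∫ z, |⟪z, s i - s j⟫_ℝ| * w z ∂μ) / 2) := by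
  let K : ι → ι → E → ℝ := fun i j z =>
    (|⟪z, s i⟫_ℝ| * w z + |⟪z, s j⟫_ℝ| * w z - |⟪z, s i - s j⟫_ℝ| * w z) / 2
  have hK : ∀ i j, Integrable (K i j) μ := fun i j =>
    (((hInt (s i)).add (hInt (s j))).sub (hInt (s i - s j))).div_const 2
  have hintegral : ∀ i j, ∫ z, K i j z ∂μ = ((∫ z, |⟪z, s i⟫_ℝ| * w z ∂μ)
      + (∫ z, |⟪z, s j⟫_ℝ| * w z ∂μ) - ∫ z, |⟪z, s i - s j⟫_ℝ| * w z ∂μ) / 2 := by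
    intro i j
    rw [integral_div, integral_sub _ (hInt _), integral_add (hInt _) (hInt _)]
    exact (hInt _).add (hInt _)
  simp only [← hintegral]
  refine quadForm_integral_nonneg c K hK fun z => ?_
  have hKz : ∀ i j, K i j z
      = (|⟪z, s i⟫_ℝ| + |⟪z, s j⟫_ℝ| - |⟪z, s i⟫_ℝ - ⟪z, s j⟫_ℝ|) / 2 * w z := by
    intro i j
    simp only [K, inner_sub_right]
    ring
  simp only [hKz, ← mul_assoc, ← Finset.sum_mul]
  exact mul_nonneg (quadForm_abs_kernel_nonneg c fun i => ⟪z, s i⟫_ℝ) (hw z)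

theorem integral_abs_inner_mul_pos (hw : ∀ z, 0 ≤ w z) {s : E}
    (hInt : Integrable (fun z => |⟪z, s⟫_ℝ| * w z) μ) (hs : 0 < μ {z | 0 < w z ∧ ⟪z, s⟫_ℝ ≠ 0}) :
    0 < ∫ z, |⟪z, s⟫_ℝ| * w z ∂μ := by
  have hsupport : {z | 0 < w z ∧ ⟪z, s⟫_ℝ ≠ 0} ⊆ Function.support fun z => |⟪z, s⟫_ℝ| * w z :=
    fun z hz => mul_ne_zero (abs_ne_zero.2 hz.2) hz.1.ne'
  exact (integral_pos_iff_support_of_nonneg (fun z => mul_nonneg (abs_nonneg _) (hw z)) hInt).2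
    (hs.trans_le (measure_mono hsupport))

end AbsInnerKernel

theorem stmt_13_general {l : ℕ} (S p : EuclideanSpace ℝ (Fin l) → ℝ)
    (hS : ∀ z, 0 ≤ S z) (hp : ∀ z, 0 ≤ p z)
    (hInt : ∀ s : EuclideanSpace ℝ (Fin l),
      Integrable (fun z => |⟪z, s⟫_ℝ| * (S z * p z))
        (volume : Measure (EuclideanSpace ℝ (Fin l))))
    -- the set where `S p > 0` is not (essentially) contained in any hyperplane
    (hhyp : ∀ s : EuclideanSpace ℝ (Fin l), s ≠ 0 →
      0 < (volume : Measure (EuclideanSpace ℝ (Fin l)))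
        {z | 0 < S z * p z ∧ ⟪z, s⟫_ℝ ≠ 0}) :
    (∀ (m : ℕ) (c : Fin m → ℝ) (sv : Fin m → EuclideanSpace ℝ (Fin l)),
      0 ≤ ∑ i, ∑ j, c i * c j *
        (((∫ z, |⟪z, sv i⟫_ℝ| * (S z * p z))
          + (∫ z, |⟪z, sv j⟫_ℝ| * (S z * p z))
          - ∫ z, |⟪z, sv i - sv j⟫_ℝ| * (S z * p z)) / 2))
    ∧ (∀ s : EuclideanSpace ℝ (Fin l),
        ((∫ z, |⟪z, s⟫_ℝ| * (S z * p z)) + (∫ z, |⟪z, s⟫_ℝ| * (S z * p z))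
          - ∫ z, |⟪z, s - s⟫_ℝ| * (S z * p z)) / 2 = ∫ z, |⟪z, s⟫_ℝ| * (S z * p z))
    ∧ (∀ s : EuclideanSpace ℝ (Fin l), s ≠ 0 →
        0 < ∫ z, |⟪z, s⟫_ℝ| * (S z * p z)) := by
  have hw : ∀ z, 0 ≤ S z * p z := fun z => mul_nonneg (hS z) (hp z)
  refine ⟨fun m c sv => quadForm_integral_abs_inner_kernel_nonneg hw hInt c sv,
    fun s => ?_, fun s hs => integral_abs_inner_mul_pos hw (hInt s) (hhyp s hs)⟩
  simp only [sub_self, inner_zero_right, abs_zero, zero_mul, integral_zero, sub_zero]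
  ring

/-- The covariance kernel `C(s,t) = (L(s)+L(t)−L(s−t))/2`, with
`L(s) = ∫ |Zᵀs| S(Z) p(Z) dZ`, is positive semidefinite, `C(s,s) = L(s)`,
and `L(s) > 0` for `s ≠ 0`. -/
theorem stmt_13 {l : ℕ} (S p : EuclideanSpace ℝ (Fin l) → ℝ)
    (hS : ∀ z, 0 ≤ S z) (hp : ∀ z, 0 ≤ p z)
    (hSp : Integrable (fun z => S z * p z)
      (volume : Measure (EuclideanSpace ℝ (Fin l))))
    (hInt : ∀ s : EuclideanSpace ℝ (Fin l),
      Integrable (fun z => |⟪z, s⟫_ℝ| * (S z * p z))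
        (volume : Measure (EuclideanSpace ℝ (Fin l))))
    -- the set where `S p > 0` is not (essentially) contained in any hyperplane
    (hhyp : ∀ s : EuclideanSpace ℝ (Fin l), s ≠ 0 →
      0 < (volume : Measure (EuclideanSpace ℝ (Fin l)))
        {z | 0 < S z * p z ∧ ⟪z, s⟫_ℝ ≠ 0}) :
    (∀ (m : ℕ) (c : Fin m → ℝ) (sv : Fin m → EuclideanSpace ℝ (Fin l)),
      0 ≤ ∑ i, ∑ j, c i * c j *
        (((∫ z, |⟪z, sv i⟫_ℝ| * (S z * p z))
          + (∫ z, |⟪z, sv j⟫_ℝ| * (S z * p z))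
          - ∫ z, |⟪z, sv i - sv j⟫_ℝ| * (S z * p z)) / 2))
    ∧ (∀ s : EuclideanSpace ℝ (Fin l),
        ((∫ z, |⟪z, s⟫_ℝ| * (S z * p z)) + (∫ z, |⟪z, s⟫_ℝ| * (S z * p z))
          - ∫ z, |⟪z, s - s⟫_ℝ| * (S z * p z)) / 2 = ∫ z, |⟪z, s⟫_ℝ| * (S z * p z))
    ∧ (∀ s : EuclideanSpace ℝ (Fin l), s ≠ 0 →
        0 < ∫ z, |⟪z, s⟫_ℝ| * (S z * p z)) :=
  stmt_13_general S p hS hp hInt hhyp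
end

section
/- Let V : ℝ^l → ℝ be twice continuously differentiable at β₀ with ∇V(β₀) = 0, and let (β_n) be a sequence with ‖β_n − β₀‖ = O(n^{−1/3}). Then √n (V(β_n) − V(β₀)) → 0 as n → ∞. -/
open Filter Asymptotics Topology

/-! The gradient of `V` vanishes at `β₀` and is differentiable there, so it is `O(‖x - β₀‖)` near
`β₀`; the mean value theorem on the ball of radius `‖x - β₀‖` then gives
`V x - V β₀ = O(‖x - β₀‖²)`. Along the sequence this is `O(n^{-2/3})`, and `√n · n^{-2/3} = n^{-1/6}`
tends to zero. -/

section QuadraticBound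

variable {E F : Type*} [NormedAddCommGroup E] [NormedSpace ℝ E]
  [NormedAddCommGroup F] [NormedSpace ℝ F] {f : E → F} {x₀ : E}

theorem isBigO_sub_sq_of_fderiv_isBigO (hdiff : ∀ᶠ x in 𝓝 x₀, DifferentiableAt ℝ f x)
    (hderiv : fderiv ℝ f =O[𝓝 x₀] (· - x₀)) :
    (f · - f x₀) =O[𝓝 x₀] (‖· - x₀‖ ^ 2) := by
  obtain ⟨K, hK0, hK⟩ := hderiv.exists_pos
  obtain ⟨r, hr, hball⟩ := Metric.eventually_nhds_iff_ball.mp (hdiff.and hK.bound)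
  refine IsBigO.of_bound K ?_
  filter_upwards [Metric.ball_mem_nhds x₀ hr] with x hx
  have hsub : Metric.closedBall x₀ (dist x x₀) ⊆ Metric.ball x₀ r :=
    Metric.closedBall_subset_ball hx
  have hbound : ∀ y ∈ Metric.closedBall x₀ (dist x x₀), ‖fderiv ℝ f y‖ ≤ K * ‖x - x₀‖ := by
    intro y hy
    calc ‖fderiv ℝ f y‖ ≤ K * ‖y - x₀‖ := by simpa using (hball y (hsub hy)).2
      _ ≤ K * ‖x - x₀‖ := by
        gcongr
        simpa [dist_eq_norm] using hy
  have hmvt := (convex_closedBall x₀ (dist x x₀)).norm_image_sub_le_of_norm_fderiv_le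
    (fun y hy => (hball y (hsub hy)).1) hbound (Metric.mem_closedBall_self dist_nonneg)
    (Metric.mem_closedBall.mpr le_rfl)
  simpa [sq, mul_assoc] using hmvt

theorem ContDiffAt.isBigO_sub_sq_of_fderiv_eq_zero (hf : ContDiffAt ℝ 2 f x₀)
    (hcrit : fderiv ℝ f x₀ = 0) :
    (f · - f x₀) =O[𝓝 x₀] (‖· - x₀‖ ^ 2) := by
  have hderiv : fderiv ℝ f =O[𝓝 x₀] (· - x₀) := by
    simpa [hcrit] using ((hf.fderiv_right le_rfl).differentiableAt one_ne_zero).isBigO_sub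
  refine isBigO_sub_sq_of_fderiv_isBigO ?_ hderiv
  filter_upwards [hf.eventually (by simp)] with x hx
  exact hx.differentiableAt two_ne_zero

end QuadraticBound

theorem tendsto_natCast_rpow_neg_atTop {p : ℝ} (hp : 0 < p) :
    Tendsto (fun n : ℕ => (n : ℝ) ^ (-p)) atTop (𝓝 0) :=
  (tendsto_rpow_neg_atTop hp).comp tendsto_natCast_atTop_atTop

theorem tendsto_sqrt_mul_rpow_neg_one_third_sq :
    Tendsto (fun n : ℕ => Real.sqrt n * ((n : ℝ) ^ (-(1:ℝ)/3)) ^ 2) atTop (𝓝 0) := by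
  refine (tendsto_natCast_rpow_neg_atTop (p := 1/6) (by norm_num)).congr' ?_
  filter_upwards [eventually_gt_atTop 0] with n hn
  have hn : (0:ℝ) < n := by exact_mod_cast hn
  rw [Real.sqrt_eq_rpow, ← Real.rpow_natCast, ← Real.rpow_mul hn.le, ← Real.rpow_add hn]
  norm_num

theorem stmt_17 {l : ℕ} (V : EuclideanSpace ℝ (Fin l) → ℝ)
    (β₀ : EuclideanSpace ℝ (Fin l)) (βn : ℕ → EuclideanSpace ℝ (Fin l))
    (hV : ContDiffAt ℝ 2 V β₀)
    (hgrad : fderiv ℝ V β₀ = 0)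
    (hrate : ∃ C : ℝ, ∀ n : ℕ, 0 < n → ‖βn n - β₀‖ ≤ C * (n : ℝ) ^ (-(1:ℝ)/3)) :
    Tendsto (fun n : ℕ => Real.sqrt n * (V (βn n) - V β₀)) atTop (nhds 0) := by
  obtain ⟨C, hC⟩ := hrate
  have hdist : (fun n => ‖βn n - β₀‖) =O[atTop] fun n : ℕ => (n : ℝ) ^ (-(1:ℝ)/3) := by
    refine IsBigO.of_bound C ?_
    filter_upwards [eventually_gt_atTop 0] with n hn
    simpa [abs_of_nonneg (Real.rpow_nonneg n.cast_nonneg _)] using hC n hn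
  have hβ : Tendsto βn atTop (𝓝 β₀) := tendsto_iff_norm_sub_tendsto_zero.mpr <|
    hdist.trans_tendsto <| by
      simpa [neg_div] using tendsto_natCast_rpow_neg_atTop (p := 1/3) (by norm_num)
  have hV' := (hV.isBigO_sub_sq_of_fderiv_eq_zero hgrad).comp_tendsto hβ
  exact ((isBigO_refl (fun n : ℕ => Real.sqrt n) atTop).mul
    (hV'.trans (hdist.pow 2))).trans_tendsto tendsto_sqrt_mul_rpow_neg_one_third_sq
end
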